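/- Let X be the 6-point metric space which is the join X_2^3 * X_1^3 (Willerton's example): two disjoint 3-point sets A, B; distances within A are 2, within B are 1, and all distances between A and B are 1. Then for all q ∈ (0,1), the magnitude of X with similarity matrix (q^{d(x,y)}) equals 6/(4q+1), and hence lim_{t→0+}|tX| = 6/5. -/
import Mathlib


open Filter Topology

/-- The similarity matrix of Willerton's six-point space `X₂³ * X₁³`: two three-point parts,
distance 2 within the first part, distance 1 within the second part, and 1 across. -/
noncomputable def willertonSim (q : ℝ) : Matrix (Fin 3 ⊕ Fin 3) (Fin 3 ⊕ Fin 3) ℝ :=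
  Matrix.of fun a b =>
    match a, b with
    | Sum.inl i, Sum.inl j => if i = j then 1 else q ^ 2
    | Sum.inr i, Sum.inr j => if i = j then 1 else q
    | _, _ => q

/-- Explicit inverse of `willertonSim q`. -/
noncomputable def willertonInv (q : ℝ) : Matrix (Fin 3 ⊕ Fin 3) (Fin 3 ⊕ Fin 3) ℝ :=
  Matrix.of fun a b =>
    match a, b with
    | Sum.inl i, Sum.inl j =>
        if i = j then (1 + 3*q - 2*q^2) / ((1+q) * ((1-q)^2 * (4*q+1)))
        else 2*q^2 / ((1+q) * ((1-q)^2 * (4*q+1)))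
    | Sum.inr i, Sum.inr j =>
        if i = j then (1 + 2*q - 2*q^2) / ((1-q)^2 * (4*q+1))
        else q*(2*q-1) / ((1-q)^2 * (4*q+1))
    | _, _ => -q / ((1-q)^2 * (4*q+1))

set_option maxHeartbeats 2000000 in
lemma willerton_mul_inv {q : ℝ} (hq : q ∈ Set.Ioo (0:ℝ) 1) :
    willertonSim q * willertonInv q = 1 := by
  obtain ⟨h0, h1⟩ := hq
  have hp : (1:ℝ) + q ≠ 0 := by nlinarith
  have hm : (1:ℝ) - q ≠ 0 := by nlinarith
  have h4 : 4*q + 1 ≠ 0 := by nlinarith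
  ext a b
  rw [Matrix.mul_apply, Fintype.sum_sum_type]
  cases a <;> cases b <;> rename_i i j <;> fin_cases i <;> fin_cases j <;>
    simp only [Fin.sum_univ_three, willertonSim, willertonInv, Matrix.of_apply,
      Matrix.one_apply, Sum.inl.injEq, Sum.inr.injEq, reduceCtorEq,
      Fin.reduceEq, reduceIte, if_true, if_false] <;>
    (try norm_num [Fin.ext_iff]) <;> (try field_simp) <;> (try ring)

lemma willerton_sum {q : ℝ} (hq : q ∈ Set.Ioo (0:ℝ) 1) :
    ∑ a, ∑ b, (willertonSim q)⁻¹ a b = 6 / (4 * q + 1) := by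
  obtain ⟨h0, h1⟩ := hq
  have hp : (1:ℝ) + q ≠ 0 := by nlinarith
  have hm : (1:ℝ) - q ≠ 0 := by nlinarith
  have h4 : 4*q + 1 ≠ 0 := by nlinarith
  rw [Matrix.inv_eq_right_inv (willerton_mul_inv ⟨h0, h1⟩)]
  simp only [Fintype.sum_sum_type, Fin.sum_univ_three, willertonInv, Matrix.of_apply,
    Fin.reduceEq, reduceIte, if_true, if_false]
  field_simp
  ring

/-- Willerton's example: the magnitude equals `6/(4q+1)` for `q ∈ (0,1)`, and hence
`lim_{t→0+} |tX| = 6/5`. -/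
theorem willerton_example :
    (∀ q ∈ Set.Ioo (0 : ℝ) 1,
      ∑ a, ∑ b, (willertonSim q)⁻¹ a b = 6 / (4 * q + 1)) ∧
    Tendsto (fun t : ℝ => ∑ a, ∑ b, (willertonSim (Real.exp (-t)))⁻¹ a b)
      (𝓝[>] (0 : ℝ)) (𝓝 (6 / 5)) := by
  constructor
  · exact fun q hq => willerton_sum hq
  · have heq : (fun t : ℝ => ∑ a, ∑ b, (willertonSim (Real.exp (-t)))⁻¹ a b)
        =ᶠ[𝓝[>] (0:ℝ)] fun t => 6 / (4 * Real.exp (-t) + 1) := by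
      filter_upwards [self_mem_nhdsWithin] with t ht
      exact willerton_sum ⟨Real.exp_pos _, by
        rw [Real.exp_lt_one_iff]; simpa using ht⟩
    rw [Filter.tendsto_congr' heq]
    have h1 : Tendsto (fun t : ℝ => 6 / (4 * Real.exp (-t) + 1)) (𝓝 (0:ℝ))
        (𝓝 (6 / (4 * Real.exp (-0) + 1))) := by
      apply ContinuousAt.tendsto
      apply ContinuousAt.div continuousAt_const
      · fun_prop
      · positivity
    have h2 : Tendsto (fun t : ℝ => 6 / (4 * Real.exp (-t) + 1)) (𝓝[>] (0:ℝ))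
        (𝓝 (6 / (4 * Real.exp (-0) + 1))) := h1.mono_left nhdsWithin_le_nhds
    have he : (6:ℝ) / (4 * Real.exp (-0) + 1) = 6 / 5 := by
      rw [neg_zero, Real.exp_zero]; norm_num
    rwa [he] at h2
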